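/- arXiv:2112.10554 — 8 statements merged into one kernel-verified Lean document; each statement's English description precedes it below -/
import Mathlib

section
/- Let R be a commutative ℂ-algebra and n a natural number. Let M be an n×n skew-symmetric matrix with entries in R, and let A, B be invertible n×n matrices with complex entries (viewed as matrices over R via the algebra map) such that A⁻¹ * M * B is also skew-symmetric. Then there exists an invertible n×n complex matrix S such that A⁻¹ * M * B = Sᵀ * M * S (with S viewed as a matrix over R). -/
/-!
With `C := B * Aᵀ`, skew-symmetry of `M` and of `A⁻¹ M B` gives `Cᵀ M = M C`, and this relation
passes to every polynomial in `C`. An invertible complex matrix has a square root `P = p(C)` that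
is a polynomial in it: interpolating square roots of the eigenvalues gives `p₀` with `p₀(C)² - C`
nilpotent, and Newton's iteration in `ℂ[X] ⧸ (χ_C)` refines `p₀` to an exact square root of `X`.
Then `S := P A⁻ᵀ` works: `Sᵀ M S = A⁻¹ Pᵀ M P A⁻ᵀ = A⁻¹ M P² A⁻ᵀ = A⁻¹ M B`.
-/

open Polynomial

theorem exists_sq_eq_of_isNilpotent_sq_sub {R : Type*} [CommRing R] (h2 : IsUnit (2 : R))
    {a p : R} (ha : IsUnit a) (hp : IsNilpotent (p ^ 2 - a)) : ∃ q, q ^ 2 = a := by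
  obtain ⟨k, hk⟩ := hp
  suffices newton : ∀ k : ℕ, ∀ p : R, (p ^ 2 - a) ^ 2 ^ k = 0 → ∃ q, q ^ 2 = a from
    newton k p (pow_eq_zero_of_le (Nat.lt_two_pow_self).le hk)
  intro k
  induction k with
  | zero => exact fun p hp => ⟨p, sub_eq_zero.mp (by simpa using hp)⟩
  | succ k ih =>
    intro p hp
    set e := p ^ 2 - a
    have he : IsNilpotent e := ⟨_, hp⟩
    have hp2 : IsUnit (p ^ 2) := by
      simpa [e] using he.isUnit_add_left_of_commute ha (Commute.all _ _)
    obtain ⟨v, hv⟩ := IsUnit.exists_right_inv (h2.mul ((isUnit_pow_iff two_ne_zero).mp hp2))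
    -- Newton's step `q = p - e / (2p)` squares the error: `q ^ 2 - a = (e / (2p)) ^ 2`
    have hq : (p - e * v) ^ 2 - a = e ^ 2 * v ^ 2 := by linear_combination (-e) * hv
    refine ih (p - e * v) ?_
    rw [hq, mul_pow, ← pow_mul, ← pow_succ', hp, zero_mul]

theorem SemiconjBy.aeval {R A : Type*} [CommSemiring R] [Semiring A] [Algebra R A] {m x y : A}
    (h : SemiconjBy m x y) (p : R[X]) : SemiconjBy m (aeval x p) (aeval y p) := by
  induction p using Polynomial.induction_on' with
  | add p q hp hq => simpa only [map_add] using hp.add_right hq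
  | monomial n a =>
    simp only [aeval_monomial]
    exact SemiconjBy.mul_right (Algebra.commutes a m).symm (h.pow_right n)

theorem Polynomial.Monic.dvd_pow_natDegree_of_forall_isRoot {K : Type*} [Field K] [IsAlgClosed K]
    {m q : K[X]} (hm : m.Monic) (hq : ∀ x ∈ m.roots, q.IsRoot x) : m ∣ q ^ m.natDegree := by
  have hsplit := (IsAlgClosed.splits m).eq_prod_roots
  rw [hm.leadingCoeff, C_1, one_mul] at hsplit
  have := Multiset.prod_dvd_prod_of_dvd (fun x => X - C x) (fun _ => q)
    fun x hx => dvd_iff_isRoot.mpr (hq x hx)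
  rwa [Multiset.map_const', Multiset.prod_replicate, ← hsplit,
    IsAlgClosed.card_roots_eq_natDegree] at this

theorem Polynomial.exists_dvd_sq_sub_X {K : Type*} [Field K] [IsAlgClosed K] (h2 : (2 : K) ≠ 0)
    {m : K[X]} (hm : m.Monic) (h0 : m.coeff 0 ≠ 0) : ∃ p : K[X], m ∣ p ^ 2 - X := by
  classical
  choose r hr using fun x : K => IsAlgClosed.exists_pow_nat_eq x two_pos
  set p₀ := Lagrange.interpolate m.roots.toFinset id r
  have hp₀ : ∀ x ∈ m.roots, (p₀ ^ 2 - X).IsRoot x := fun x hx => by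
    have : p₀.eval x = r x :=
      Lagrange.eval_interpolate_at_node r (Set.injOn_id _) (Multiset.mem_toFinset.mpr hx)
    rw [IsRoot, eval_sub, eval_pow, eval_X, this, sub_eq_zero]
    exact hr x
  have hroot : IsUnit (AdjoinRoot.root m) := by
    obtain ⟨u, v, huv⟩ := (irreducible_X.coprime_iff_not_dvd).mpr (mt X_dvd_iff.mp h0)
    refine IsUnit.of_mul_eq_one_right (AdjoinRoot.mk m u) ?_
    simpa [AdjoinRoot.mk_X] using congrArg (AdjoinRoot.mk m) huv
  have hnil : IsNilpotent (AdjoinRoot.mk m p₀ ^ 2 - AdjoinRoot.root m) :=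
    ⟨m.natDegree, by
      rw [← AdjoinRoot.mk_X, ← map_pow, ← map_sub, ← map_pow, AdjoinRoot.mk_eq_zero]
      exact hm.dvd_pow_natDegree_of_forall_isRoot hp₀⟩
  have htwo : IsUnit (2 : AdjoinRoot m) := by
    simpa [map_ofNat] using (IsUnit.mk0 _ h2).map (AdjoinRoot.of m)
  obtain ⟨q, hq⟩ := exists_sq_eq_of_isNilpotent_sq_sub htwo hroot hnil
  obtain ⟨p, rfl⟩ := AdjoinRoot.mk_surjective q
  refine ⟨p, AdjoinRoot.mk_eq_zero.mp ?_⟩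
  rw [map_sub, map_pow, hq, AdjoinRoot.mk_X, sub_self]

namespace Matrix

theorem exists_aeval_sq_eq {K n : Type*} [Field K] [IsAlgClosed K] [Fintype n]
    [DecidableEq n] (h2 : (2 : K) ≠ 0) {C : Matrix n n K} (hC : IsUnit C) :
    ∃ p : K[X], aeval C p ^ 2 = C := by
  have h0 : C.charpoly.coeff 0 ≠ 0 := fun h => by
    have hdet := (C.isUnit_iff_isUnit_det.mp hC).ne_zero
    rw [det_eq_sign_charpoly_coeff, h, mul_zero] at hdet
    exact hdet rfl
  obtain ⟨p, t, ht⟩ := exists_dvd_sq_sub_X h2 C.charpoly_monic h0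
  refine ⟨p, sub_eq_zero.mp ?_⟩
  simpa [aeval_self_charpoly] using congrArg (aeval C) ht

theorem transpose_aeval {K n : Type*} [CommSemiring K] [Fintype n] [DecidableEq n]
    (C : Matrix n n K) (p : K[X]) : (aeval C p)ᵀ = aeval Cᵀ p := by
  simpa [aeval_op_apply] using
    congrArg MulOpposite.unop (aeval_algHom_apply (transposeAlgEquiv n K K) C p).symm

variable {R n : Type*} [CommRing R] [Fintype n] [DecidableEq n] {M a a' b : Matrix n n R}

theorem semiconjBy_mul_transpose_of_skew (hM : Mᵀ = -M) (ha : a * a' = 1)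
    (h : (a' * M * b)ᵀ = -(a' * M * b)) : SemiconjBy M (b * aᵀ) (a * bᵀ) := by
  have hsymm : bᵀ * M * a'ᵀ = a' * M * b := by
    simpa [transpose_mul, hM, mul_assoc] using h
  have ha' : a'ᵀ * aᵀ = 1 := by rw [← transpose_mul, ha, transpose_one]
  calc M * (b * aᵀ) = a * (a' * M * b) * aᵀ := by simp only [← mul_assoc, ha, one_mul]
    _ = a * (bᵀ * M * a'ᵀ) * aᵀ := by rw [hsymm]
    _ = a * bᵀ * M := by simp only [mul_assoc, ha', mul_one]

theorem inv_mul_mul_eq_transpose_mul_mul {P : Matrix n n R} (ha : a' * a = 1)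
    (hP : SemiconjBy M P Pᵀ) (hPP : P * P = b * aᵀ) :
    a' * M * b = (P * a'ᵀ)ᵀ * M * (P * a'ᵀ) := by
  have ha' : aᵀ * a'ᵀ = 1 := by rw [← transpose_mul, ha, transpose_one]
  calc a' * M * b = a' * M * (b * aᵀ) * a'ᵀ := by simp only [mul_assoc, ha', mul_one]
    _ = a' * (M * P) * P * a'ᵀ := by rw [← hPP]; simp only [mul_assoc]
    _ = (P * a'ᵀ)ᵀ * M * (P * a'ᵀ) := by
      rw [hP.eq, transpose_mul, transpose_transpose]; simp only [mul_assoc]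

end Matrix

open Matrix

/-- Lemma A.1: if `M` is skew-symmetric over a commutative `ℂ`-algebra `R` and
`A⁻¹ * M * B` is also skew-symmetric for invertible complex matrices `A`, `B`, then
`A⁻¹ * M * B = Sᵀ * M * S` for some invertible complex matrix `S`. -/
theorem stmt_0 (R : Type*) [CommRing R] [Algebra ℂ R] (n : ℕ)
    (M : Matrix (Fin n) (Fin n) R) (hM : Mᵀ = -M)
    (A B : Matrix (Fin n) (Fin n) ℂ) (hA : IsUnit A) (hB : IsUnit B)
    (hskew : ((A⁻¹.map (algebraMap ℂ R)) * M * (B.map (algebraMap ℂ R)))ᵀ =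
      -((A⁻¹.map (algebraMap ℂ R)) * M * (B.map (algebraMap ℂ R)))) :
    ∃ S : Matrix (Fin n) (Fin n) ℂ, IsUnit S ∧
      (A⁻¹.map (algebraMap ℂ R)) * M * (B.map (algebraMap ℂ R)) =
        (S.map (algebraMap ℂ R))ᵀ * M * (S.map (algebraMap ℂ R)) := by
  let φ := (Algebra.ofId ℂ R).mapMatrix (m := Fin n)
  have hφ (X : Matrix (Fin n) (Fin n) ℂ) : X.map (algebraMap ℂ R) = φ X := rfl
  have hφT (X : Matrix (Fin n) (Fin n) ℂ) : φ Xᵀ = (φ X)ᵀ := (transpose_map ..).symm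
  simp only [hφ] at hskew ⊢
  have hrel : SemiconjBy M (φ (B * Aᵀ)) (φ (B * Aᵀ)ᵀ) := by
    have := semiconjBy_mul_transpose_of_skew hM
      (by rw [← map_mul, mul_nonsing_inv A (A.isUnit_iff_isUnit_det.mp hA), map_one]) hskew
    rwa [transpose_mul, transpose_transpose, map_mul, map_mul, hφT, hφT]
  have hC : IsUnit (B * Aᵀ) := hB.mul ((isUnit_transpose A).mpr hA)
  obtain ⟨p, hp⟩ := exists_aeval_sq_eq two_ne_zero hC
  set Q := aeval (B * Aᵀ) p
  have hQ : SemiconjBy M (φ Q) (φ Q)ᵀ := by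
    simpa only [Q, ← hφT, transpose_aeval, aeval_algHom_apply] using hrel.aeval p
  refine ⟨Q * A⁻¹ᵀ, ?_, ?_⟩
  · have hQunit : IsUnit Q := ((Commute.refl Q).isUnit_mul_iff.mp (by rwa [← pow_two, hp])).1
    exact hQunit.mul ((isUnit_transpose _).mpr (isUnit_nonsing_inv_iff.mpr hA))
  · rw [map_mul, hφT]
    refine inv_mul_mul_eq_transpose_mul_mul (a := φ A) ?_ hQ ?_
    · rw [← map_mul, nonsing_inv_mul A (A.isUnit_iff_isUnit_det.mp hA), map_one]
    · rw [← map_mul, ← pow_two, hp, map_mul, hφT]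
end

section
/- Let R be a commutative ℂ-algebra, λ and μ complex numbers with λ ≠ μ, B a p×p complex matrix such that B − λ·1 is nilpotent, and C a q×q complex matrix such that C − μ·1 is nilpotent. If X is a p×q matrix with entries in R satisfying B * X = X * C (with B and C viewed as matrices over R), then X = 0. -/
open Matrix

/-- Sylvester-type uniqueness: if `B - λ·1` and `C - μ·1` are nilpotent complex matrices
with `λ ≠ μ`, and `X` is a matrix over a commutative `ℂ`-algebra `R` with
`B * X = X * C` (viewing `B`, `C` over `R`), then `X = 0`. -/
theorem stmt_2 (R : Type*) [CommRing R] [Algebra ℂ R] (p q : ℕ)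
    (lam mu : ℂ) (hne : lam ≠ mu)
    (B : Matrix (Fin p) (Fin p) ℂ)
    (hB : IsNilpotent (B - lam • (1 : Matrix (Fin p) (Fin p) ℂ)))
    (C : Matrix (Fin q) (Fin q) ℂ)
    (hC : IsNilpotent (C - mu • (1 : Matrix (Fin q) (Fin q) ℂ)))
    (X : Matrix (Fin p) (Fin q) R)
    (h : (B.map (algebraMap ℂ R)) * X = X * (C.map (algebraMap ℂ R))) :
    X = 0 := by
  set φ := algebraMap ℂ R with hφ
  set N' : Matrix (Fin p) (Fin p) R := (B - lam • (1 : Matrix (Fin p) (Fin p) ℂ)).map φ with hN'def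
  set M' : Matrix (Fin q) (Fin q) R := (C - mu • (1 : Matrix (Fin q) (Fin q) ℂ)).map φ with hM'def
  have hN' : IsNilpotent N' := by
    obtain ⟨n, hn⟩ := hB
    exact ⟨n, by rw [hN'def, ← RingHom.mapMatrix_apply, ← map_pow, hn, map_zero]⟩
  have hM' : IsNilpotent M' := by
    obtain ⟨n, hn⟩ := hC
    exact ⟨n, by rw [hM'def, ← RingHom.mapMatrix_apply, ← map_pow, hn, map_zero]⟩
  -- left and right multiplication operators, as ℂ-linear maps
  let f : Matrix (Fin p) (Fin q) R →ₗ[ℂ] Matrix (Fin p) (Fin q) R :=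
    { toFun := fun Y => N' * Y
      map_add' := fun Y Z => by simp [Matrix.mul_add]
      map_smul' := fun c Y => by simp [Matrix.mul_smul] }
  let g : Matrix (Fin p) (Fin q) R →ₗ[ℂ] Matrix (Fin p) (Fin q) R :=
    { toFun := fun Y => Y * M'
      map_add' := fun Y Z => by simp [Matrix.add_mul]
      map_smul' := fun c Y => by simp [Matrix.smul_mul] }
  have hfpow : ∀ (n : ℕ) (Y : Matrix (Fin p) (Fin q) R), (f ^ n) Y = N' ^ n * Y := by
    intro n
    induction n with
    | zero => intro Y; simp
    | succ n ih =>
      intro Y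
      rw [pow_succ, Module.End.mul_apply, ih (f Y)]
      show N' ^ n * (N' * Y) = N' ^ (n + 1) * Y
      rw [pow_succ, Matrix.mul_assoc]
  have hgpow : ∀ (n : ℕ) (Y : Matrix (Fin p) (Fin q) R), (g ^ n) Y = Y * M' ^ n := by
    intro n
    induction n with
    | zero => intro Y; simp
    | succ n ih =>
      intro Y
      rw [pow_succ, Module.End.mul_apply, ih (g Y)]
      show (Y * M') * M' ^ n = Y * M' ^ (n + 1)
      rw [pow_succ', Matrix.mul_assoc]
  have hf : IsNilpotent f := by
    obtain ⟨n, hn⟩ := hN'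
    exact ⟨n, LinearMap.ext fun Y => by simp [hfpow, hn]⟩
  have hg : IsNilpotent g := by
    obtain ⟨n, hn⟩ := hM'
    exact ⟨n, LinearMap.ext fun Y => by simp [hgpow, hn]⟩
  have hcomm : Commute f g := by
    refine LinearMap.ext fun Y => ?_
    show N' * (Y * M') = (N' * Y) * M'
    rw [Matrix.mul_assoc]
  have hfg : IsNilpotent (f - g) := hcomm.isNilpotent_sub hf hg
  -- key eigenvalue computation
  have hone : ∀ (c : ℂ) (k : ℕ),
      ((c • (1 : Matrix (Fin k) (Fin k) ℂ)).map φ) = φ c • (1 : Matrix (Fin k) (Fin k) R) := by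
    intro c k
    ext i j
    simp [Matrix.map_apply, Matrix.one_apply, apply_ite φ]
  have hkey : (f - g) X = (mu - lam) • X := by
    have h1 : N' * X = (B.map φ) * X - φ lam • X := by
      rw [hN'def, Matrix.map_sub _ (map_sub φ), Matrix.sub_mul, hone, Matrix.smul_mul, Matrix.one_mul]
    have h2 : X * M' = X * (C.map φ) - φ mu • X := by
      rw [hM'def, Matrix.map_sub _ (map_sub φ), Matrix.mul_sub, hone, Matrix.mul_smul, Matrix.mul_one]
    show N' * X - X * M' = (mu - lam) • X
    rw [h1, h2, h]
    have : φ mu • X - φ lam • X = (mu - lam) • X := by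
      rw [← sub_smul, ← map_sub, algebraMap_smul]
    rw [sub_sub_sub_cancel_left, this]
  have hiter : ∀ n : ℕ, ((f - g) ^ n) X = (mu - lam) ^ n • X := by
    intro n
    induction n with
    | zero => simp
    | succ n ih =>
      rw [pow_succ', Module.End.mul_apply, ih, LinearMap.map_smul, hkey, smul_smul, ← pow_succ]
  obtain ⟨n, hn⟩ := hfg
  have h0 : (mu - lam) ^ n • X = 0 := by
    rw [← hiter, hn, LinearMap.zero_apply]
  have hne' : (mu - lam) ^ n ≠ 0 := pow_ne_zero _ (sub_ne_zero.mpr (Ne.symm hne))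
  calc X = ((mu - lam) ^ n)⁻¹ • ((mu - lam) ^ n • X) := by
        rw [smul_smul, inv_mul_cancel₀ hne', one_smul]
    _ = 0 := by rw [h0, smul_zero]
end

section
/- Let R = ℂ[x₀,…,x₄] and let l₀, l₁, l₂, l₃ be ℂ-linearly independent linear forms in R. Suppose Q₁, …, Q₆, F ∈ R satisfy Q₁·l₂ − Q₂·l₁ + Q₃·l₀ = F and Q₃·l₃ + Q₄·l₂ − Q₅·l₁ + Q₆·l₀ = 0. Then F belongs to the ideal (l₁, l₂, l₀²) of R. -/
/-!
After a linear change of coordinates the independent linear forms `l₀, l₁, l₂, l₃` become the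
variables `X₀, X₁, X₂, X₃`. The second relation says `Q₃ X₃ ∈ (X₀, X₁, X₂)`, and since this
monomial ideal does not involve `X₃`, already `Q₃ ∈ (l₀, l₁, l₂)`. Writing
`Q₃ = a l₀ + b l₁ + c l₂` in the first relation exhibits `F` in `(l₁, l₂, l₀²)`.
-/

open MvPolynomial

namespace MvPolynomial

variable {σ R K : Type*}

theorem mem_span_X_image_of_X_mul_mem [CommSemiring R] {s : Set σ} {i : σ} (hi : i ∉ s)
    {p : MvPolynomial σ R} (h : X i * p ∈ Ideal.span (X '' s)) :
    p ∈ Ideal.span (X '' s) := by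
  classical
  rw [mem_ideal_span_X_image] at h ⊢
  intro m hm
  obtain ⟨j, hj, hne⟩ := h (Finsupp.single i 1 + m) (by simpa using hm)
  have hij : i ≠ j := (ne_of_mem_of_not_mem hj hi).symm
  exact ⟨j, hj, by simpa [Finsupp.single_apply, hij] using hne⟩

theorem isHomogeneous_one_iff_exists_sum_smul_X [CommSemiring R] [Fintype σ]
    {p : MvPolynomial σ R} :
    p.IsHomogeneous 1 ↔ ∃ c : σ → R, ∑ j, c j • X j = p := by
  rw [← mem_homogeneousSubmodule, homogeneousSubmodule_one_eq_span_X,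
    Submodule.mem_span_range_iff_exists_fun]

/-- Both sides are the symmetric algebra of `σ → R`, presented through `b` and through the
standard basis respectively. -/
theorem exists_algEquiv_X_eq_sum_basis [CommSemiring R] [Fintype σ]
    (b : Module.Basis σ R (σ → R)) :
    ∃ e : MvPolynomial σ R ≃ₐ[R] MvPolynomial σ R, ∀ i, e (X i) = ∑ j, b i j • X j := by
  refine ⟨(SymmetricAlgebra.equivMvPolynomial b).symm.trans
    (SymmetricAlgebra.equivMvPolynomial (Pi.basisFun R σ)), fun i => ?_⟩
  simp [SymmetricAlgebra.equivMvPolynomial, Module.Basis.constr_apply_fintype]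

theorem exists_algEquiv_X_castSucc_eq [Field K] {n : ℕ}
    {l : Fin n → MvPolynomial (Fin (n + 1)) K}
    (hl : ∀ k, (l k).IsHomogeneous 1) (hind : LinearIndependent K l) :
    ∃ e : MvPolynomial (Fin (n + 1)) K ≃ₐ[K] MvPolynomial (Fin (n + 1)) K,
      ∀ k, e (X k.castSucc) = l k := by
  choose c hc using fun k => isHomogeneous_one_iff_exists_sum_smul_X.mp (hl k)
  have hcind : LinearIndependent K c := by
    refine LinearIndependent.of_comp
      (Fintype.linearCombination K (X : Fin (n + 1) → MvPolynomial _ K)) ?_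
    convert hind
    ext1 k
    simp [Fintype.linearCombination_apply, hc]
  obtain ⟨u, hu⟩ := exists_linearIndependent_snoc_of_lt_finrank hcind (by simp)
  obtain ⟨e, he⟩ :=
    exists_algEquiv_X_eq_sum_basis (basisOfLinearIndependentOfCardEqFinrank hu (by simp))
  exact ⟨e, fun k => by simp [he, hc]⟩

theorem mem_span_range_castSucc_of_mul_last_mem [Field K] {n : ℕ}
    {l : Fin (n + 1) → MvPolynomial (Fin (n + 2)) K}
    (hl : ∀ k, (l k).IsHomogeneous 1) (hind : LinearIndependent K l)
    {p : MvPolynomial (Fin (n + 2)) K}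
    (h : p * l (Fin.last n) ∈ Ideal.span (Set.range (l ∘ Fin.castSucc))) :
    p ∈ Ideal.span (Set.range (l ∘ Fin.castSucc)) := by
  obtain ⟨e, he⟩ := exists_algEquiv_X_castSucc_eq hl hind
  let s : Set (Fin (n + 2)) := Set.range (Fin.castSucc ∘ Fin.castSucc)
  have hspan : Ideal.span (Set.range (l ∘ Fin.castSucc)) =
      (Ideal.span (X '' s)).comap e.symm := by
    rw [show (Ideal.span (X '' s)).comap e.symm = (Ideal.span (X '' s)).comap e.toRingEquiv.symm
      from rfl, Ideal.comap_symm, Ideal.map_span, ← Set.range_comp, ← Set.range_comp]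
    simp [Function.comp_def, he]
  have hlast : (Fin.last n).castSucc ∉ s := by simp [s, Fin.castSucc_ne_last]
  rw [hspan, Ideal.mem_comap] at h ⊢
  refine mem_span_X_image_of_X_mul_mem hlast ?_
  simpa [mul_comm, ← he] using h

end MvPolynomial

/-- Case (e) of Lemma 2.5(b): if `Q₁l₂ - Q₂l₁ + Q₃l₀ = F` and
`Q₃l₃ + Q₄l₂ - Q₅l₁ + Q₆l₀ = 0` for linearly independent linear forms `l₀, l₁, l₂, l₃`,
then `F ∈ (l₁, l₂, l₀²)`. -/
theorem stmt_5 (l₀ l₁ l₂ l₃ : MvPolynomial (Fin 5) ℂ)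
    (h₀ : l₀.IsHomogeneous 1) (h₁ : l₁.IsHomogeneous 1)
    (h₂ : l₂.IsHomogeneous 1) (h₃ : l₃.IsHomogeneous 1)
    (hind : LinearIndependent ℂ ![l₀, l₁, l₂, l₃])
    (Q₁ Q₂ Q₃ Q₄ Q₅ Q₆ F : MvPolynomial (Fin 5) ℂ)
    (e₁ : Q₁ * l₂ - Q₂ * l₁ + Q₃ * l₀ = F)
    (e₂ : Q₃ * l₃ + Q₄ * l₂ - Q₅ * l₁ + Q₆ * l₀ = 0) :
    F ∈ Ideal.span {l₁, l₂, l₀ ^ 2} := by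
  have hrange : Set.range (![l₀, l₁, l₂, l₃] ∘ Fin.castSucc) = {l₀, l₁, l₂} := by
    ext x
    simp [Fin.exists_fin_succ, or_comm, eq_comm]
  have hQ₃ : Q₃ ∈ Ideal.span {l₀, l₁, l₂} := by
    rw [← hrange]
    have hl : ∀ k, (![l₀, l₁, l₂, l₃] k).IsHomogeneous 1 := by
      intro k; fin_cases k <;> assumption
    refine mem_span_range_castSucc_of_mul_last_mem hl hind ?_
    rw [hrange]
    refine Submodule.mem_span_triple.mpr ⟨-Q₆, Q₅, -Q₄, ?_⟩
    change -Q₆ * l₀ + Q₅ * l₁ + -Q₄ * l₂ = Q₃ * l₃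
    linear_combination -e₂
  obtain ⟨a, b, c, rfl⟩ := Submodule.mem_span_triple.mp hQ₃
  exact Submodule.mem_span_triple.mpr
    ⟨b * l₀ - Q₂, Q₁ + c * l₀, a, by simp only [smul_eq_mul]; linear_combination e₁⟩
end

section
/- Let R = ℂ[x₀,…,x₄] and let l₀, l₁, l₂, l₃, l₄ be ℂ-linearly independent linear forms in R. Suppose Q₁, …, Q₆, F ∈ R satisfy Q₁·l₂ − Q₂·l₁ + Q₃·l₀ = F and −Q₂·l₄ + Q₃·l₃ + Q₄·l₂ − Q₅·l₁ + Q₆·l₀ = 0. Then F belongs to the ideal (l₂, l₀l₄ − l₁l₃, l₁², l₀l₁, l₀²) of R. -/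
/-!
Linearly independent linear forms `l₀, …, l₄` are the images of the variables under a linear
change of coordinates, which is an automorphism of `R`, so we may assume `lᵢ = xᵢ`. Setting
`x₀ = x₁ = x₂ = 0` (written `Q ↦ Q̄`) in the second relation gives `Q̄₂ x₄ = Q̄₃ x₃`; as `x₃`
and `x₄` are coprime, `Q̄₂ = G x₃` and `Q̄₃ = G x₄`. Substituting `Qᵢ = Q̄ᵢ + (terms in x₀, x₁,
x₂)` into the first relation writes `F` as a combination of `x₂`, `x₀x₄ - x₁x₃` and the
monomials `x₁², x₀x₁, x₀²`.
-/

open MvPolynomial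

namespace MvPolynomial

section LinearChangeOfVars

variable {σ R : Type*} [Fintype σ] [CommSemiring R]

theorem bind₁_toMvPolynomial_comp (A B : Matrix σ σ R) :
    (bind₁ A.toMvPolynomial).comp (bind₁ B.toMvPolynomial) = bind₁ (B * A).toMvPolynomial := by
  rw [bind₁_comp_bind₁]
  congr 1
  funext i
  rw [Matrix.toMvPolynomial_mul]

noncomputable def linearChangeOfVars [DecidableEq σ] (u : (Matrix σ σ R)ˣ) :
    MvPolynomial σ R ≃ₐ[R] MvPolynomial σ R :=
  AlgEquiv.ofAlgHom (bind₁ (u : Matrix σ σ R).toMvPolynomial)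
    (bind₁ (↑u⁻¹ : Matrix σ σ R).toMvPolynomial)
    (by rw [bind₁_toMvPolynomial_comp, u.inv_mul, Matrix.toMvPolynomial_one, bind₁_X_left])
    (by rw [bind₁_toMvPolynomial_comp, u.mul_inv, Matrix.toMvPolynomial_one, bind₁_X_left])

@[simp]
theorem linearChangeOfVars_X [DecidableEq σ] (u : (Matrix σ σ R)ˣ) (i : σ) :
    linearChangeOfVars u (X i) = (u : Matrix σ σ R).toMvPolynomial i :=
  bind₁_X_right _ i

theorem exists_toMvPolynomial_eq {l : σ → MvPolynomial σ R} (hl : ∀ i, (l i).IsHomogeneous 1) :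
    ∃ A : Matrix σ σ R, A.toMvPolynomial = l := by
  have hspan i : l i ∈ Submodule.span R (Set.range X) := by
    rw [← homogeneousSubmodule_one_eq_span_X]
    exact hl i
  choose A hA using fun i => (Submodule.mem_span_range_iff_exists_fun R).mp (hspan i)
  refine ⟨Matrix.of A, ?_⟩
  funext i
  simp [Matrix.toMvPolynomial, ← hA i, ← C_mul_X_eq_monomial, smul_eq_C_mul]

theorem toMvPolynomial_eq_linearCombination (A : Matrix σ σ R) (i : σ) :
    A.toMvPolynomial i = Fintype.linearCombination R (X : σ → MvPolynomial σ R) (A i) := by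
  simp [Matrix.toMvPolynomial, Fintype.linearCombination_apply, ← C_mul_X_eq_monomial,
    smul_eq_C_mul]

end LinearChangeOfVars

theorem exists_algEquiv_X_eq {σ K : Type*} [Fintype σ] [DecidableEq σ] [Field K]
    {l : σ → MvPolynomial σ K} (hl : ∀ i, (l i).IsHomogeneous 1)
    (hind : LinearIndependent K l) :
    ∃ e : MvPolynomial σ K ≃ₐ[K] MvPolynomial σ K, ∀ i, e (X i) = l i := by
  obtain ⟨A, rfl⟩ := exists_toMvPolynomial_eq hl
  have hA : IsUnit A := by
    rw [← Matrix.linearIndependent_rows_iff_isUnit]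
    refine LinearIndependent.of_comp (Fintype.linearCombination K (X : σ → MvPolynomial σ K)) ?_
    convert hind using 1
    funext i
    exact (toMvPolynomial_eq_linearCombination A i).symm
  exact ⟨linearChangeOfVars hA.unit, fun i => linearChangeOfVars_X _ i⟩

section KillVars

variable {σ R : Type*} [DecidableEq σ] [CommSemiring R]

noncomputable def killVars (s : Finset σ) : MvPolynomial σ R →ₐ[R] MvPolynomial σ R :=
  aeval fun i => if i ∈ s then 0 else X i

variable {s : Finset σ} {i : σ}

@[simp]
theorem killVars_X_of_mem (hi : i ∈ s) : killVars s (X i : MvPolynomial σ R) = 0 := by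
  simp [killVars, hi]

@[simp]
theorem killVars_X_of_notMem (hi : i ∉ s) : killVars s (X i : MvPolynomial σ R) = X i := by
  simp [killVars, hi]

end KillVars

theorem sub_killVars_mem_span {σ R : Type*} [DecidableEq σ] [CommRing R] (s : Finset σ)
    (p : MvPolynomial σ R) : p - killVars s p ∈ Ideal.span (X '' ↑s) := by
  rw [← Ideal.Quotient.eq, ← Ideal.Quotient.mkₐ_eq_mk R, ← AlgHom.comp_apply]
  congr 1
  refine algHom_ext fun i => ?_
  by_cases hi : i ∈ s
  · simpa [hi, Ideal.Quotient.eq_zero_iff_mem] using Ideal.subset_span (Set.mem_image_of_mem X hi)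
  · simp [hi]

theorem exists_eq_mul_X_of_mul_X_eq {σ R : Type*} [CommRing R] [IsDomain R] {i j : σ}
    (hij : i ≠ j) {p q : MvPolynomial σ R} (h : p * X i = q * X j) :
    ∃ g, p = g * X j ∧ q = g * X i := by
  have hdvd : X j ∣ p * X i := ⟨q, by rw [h, mul_comm]⟩
  obtain ⟨g, rfl⟩ : X j ∣ p :=
    (X_prime.dvd_or_dvd hdvd).resolve_right fun h' => hij (X_dvd_X.mp h').symm
  refine ⟨g, mul_comm _ _, mul_right_cancel₀ (X_ne_zero j) ?_⟩
  rw [← h]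
  ring

end MvPolynomial

/-- The saturated ideal of the double line on the quadric surface `l₂ = l₀l₄ - l₁l₃ = 0`. -/
def doubleLineIdeal {S : Type*} [CommRing S] (l₀ l₁ l₂ l₃ l₄ : S) : Ideal S :=
  Ideal.span {l₂, l₀ * l₄ - l₁ * l₃, l₁ ^ 2, l₀ * l₁, l₀ ^ 2}

theorem doubleLineIdeal_map {S T F : Type*} [CommRing S] [CommRing T] [FunLike F S T]
    [RingHomClass F S T] (f : F) (l₀ l₁ l₂ l₃ l₄ : S) :
    (doubleLineIdeal l₀ l₁ l₂ l₃ l₄).map f =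
      doubleLineIdeal (f l₀) (f l₁) (f l₂) (f l₃) (f l₄) := by
  simp [doubleLineIdeal, Ideal.map_span, Set.image_insert_eq]

theorem mem_doubleLineIdeal_X {R : Type*} [CommRing R] [IsDomain R]
    {Q₁ Q₂ Q₃ Q₄ Q₅ Q₆ F : MvPolynomial (Fin 5) R}
    (e₁ : Q₁ * X 2 - Q₂ * X 1 + Q₃ * X 0 = F)
    (e₂ : -Q₂ * X 4 + Q₃ * X 3 + Q₄ * X 2 - Q₅ * X 1 + Q₆ * X 0 = 0) :
    F ∈ doubleLineIdeal (X 0) (X 1) (X 2) (X 3) (X 4) := by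
  set π : MvPolynomial (Fin 5) R →ₐ[R] MvPolynomial (Fin 5) R := killVars {0, 1, 2}
  have hπ : π Q₂ * X 4 = π Q₃ * X 3 := by
    have h := congrArg π e₂
    simp (disch := decide) only [π, map_add, map_sub, map_neg, map_mul, map_zero,
      killVars_X_of_mem, killVars_X_of_notMem] at h
    linear_combination -h
  obtain ⟨G, hG₂, hG₃⟩ := exists_eq_mul_X_of_mul_X_eq (by decide : (4 : Fin 5) ≠ 3) hπ
  have hspan (Q : MvPolynomial (Fin 5) R) :
      ∃ a₀ a₁ a₂, Q - π Q = a₀ * X 0 + a₁ * X 1 + a₂ * X 2 := by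
    have h := sub_killVars_mem_span {0, 1, 2} Q
    simp only [Finset.coe_insert, Finset.coe_singleton, Set.image_insert_eq, Set.image_singleton,
      Ideal.mem_span_insert, Ideal.mem_span_singleton'] at h
    obtain ⟨a₀, _, ⟨a₁, _, ⟨a₂, rfl⟩, rfl⟩, h⟩ := h
    exact ⟨a₀, a₁, a₂, by rw [h]; ring⟩
  obtain ⟨a₀, a₁, a₂, ha⟩ := hspan Q₂
  obtain ⟨b₀, b₁, b₂, hb⟩ := hspan Q₃
  simp only [doubleLineIdeal, Ideal.mem_span_insert, Ideal.mem_span_singleton']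
  exact ⟨Q₁ - a₂ * X 1 + b₂ * X 0, _, ⟨G, _, ⟨-a₁, _, ⟨b₁ - a₀, _, ⟨b₀, rfl⟩, rfl⟩, rfl⟩, rfl⟩,
    by linear_combination -e₁ - X 1 * ha + X 0 * hb - X 1 * hG₂ + X 0 * hG₃⟩

/-- Case (d) of Lemma 2.5(b): if `Q₁l₂ - Q₂l₁ + Q₃l₀ = F` and
`-Q₂l₄ + Q₃l₃ + Q₄l₂ - Q₅l₁ + Q₆l₀ = 0` for linearly independent linear forms
`l₀, …, l₄`, then `F ∈ (l₂, l₀l₄ - l₁l₃, l₁², l₀l₁, l₀²)`. -/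
theorem stmt_6 (l₀ l₁ l₂ l₃ l₄ : MvPolynomial (Fin 5) ℂ)
    (h₀ : l₀.IsHomogeneous 1) (h₁ : l₁.IsHomogeneous 1)
    (h₂ : l₂.IsHomogeneous 1) (h₃ : l₃.IsHomogeneous 1) (h₄ : l₄.IsHomogeneous 1)
    (hind : LinearIndependent ℂ ![l₀, l₁, l₂, l₃, l₄])
    (Q₁ Q₂ Q₃ Q₄ Q₅ Q₆ F : MvPolynomial (Fin 5) ℂ)
    (e₁ : Q₁ * l₂ - Q₂ * l₁ + Q₃ * l₀ = F)
    (e₂ : -Q₂ * l₄ + Q₃ * l₃ + Q₄ * l₂ - Q₅ * l₁ + Q₆ * l₀ = 0) :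
    F ∈ Ideal.span {l₂, l₀ * l₄ - l₁ * l₃, l₁ ^ 2, l₀ * l₁, l₀ ^ 2} := by
  obtain ⟨e, he⟩ := exists_algEquiv_X_eq (fun i => by fin_cases i <;> assumption) hind
  have hX (i : Fin 5) : e.symm (![l₀, l₁, l₂, l₃, l₄] i) = X i := by
    rw [← he, e.symm_apply_apply]
  have hF := mem_doubleLineIdeal_X (Q₁ := e.symm Q₁) (Q₂ := e.symm Q₂) (Q₃ := e.symm Q₃)
    (Q₄ := e.symm Q₄) (Q₅ := e.symm Q₅) (Q₆ := e.symm Q₆) (F := e.symm F)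
    (by rw [← e₁, ← hX 0, ← hX 1, ← hX 2]; simp)
    (by rw [← map_zero e.symm, ← e₂, ← hX 0, ← hX 1, ← hX 2, ← hX 3, ← hX 4]; simp)
  have hmap := Ideal.mem_map_of_mem e hF
  rw [doubleLineIdeal_map, e.apply_symm_apply, he 0, he 1, he 2, he 3, he 4] at hmap
  exact hmap
end

section
/- Let R = ℂ[x₀,…,x₄] and let l₀, l₁, l₂ be ℂ-linearly independent linear forms in R. If q₀, q₁, q₂ ∈ R are such that q₂·l₂ + q₁·l₁ + q₀·l₀ lies in the ideal (l₁, l₂, l₀²), then q₀ lies in the ideal (l₀, l₁, l₂). -/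
/-!
Subtracting `q₂l₂ + q₁l₁` leaves `q₀l₀ ∈ (l₁, l₂, l₀²)`. A linear change of coordinates sends
`l₀, l₁, l₂` to `X 0, X 1, X 2`, which turns this into a statement about the monomial ideal
`(X 1, X 2, X 0 ^ 2)`: each monomial of `p * X 0` in it is divisible by `X 1`, `X 2` or `X 0 ^ 2`,
so each monomial of `p` is divisible by `X 0`, `X 1` or `X 2`.
-/

open MvPolynomial

theorem LinearIndependent.exists_extend_castLE {K M : Type*} [DivisionRing K] [AddCommGroup M]
    [Module K M] {m n : ℕ} {v : Fin m → M} (hv : LinearIndependent K v) (hmn : m ≤ n)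
    (hn : n ≤ Module.finrank K M) :
    ∃ w : Fin n → M, LinearIndependent K w ∧ ∀ i, w (Fin.castLE hmn i) = v i := by
  induction n, hmn using Nat.le_induction with
  | base => exact ⟨v, hv, fun i => by simp⟩
  | succ n hmn ih =>
    obtain ⟨w, hw, hwv⟩ := ih (by omega)
    obtain ⟨x, hx⟩ := exists_linearIndependent_snoc_of_lt_finrank hw (by omega)
    exact ⟨Fin.snoc w x, hx, fun i =>
      (Fin.snoc_castSucc (α := fun _ => M) x w (Fin.castLE hmn i)).trans (hwv i)⟩

namespace MvPolynomial

variable {σ R : Type*}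

theorem IsHomogeneous.eq_sum_coeff_single_smul_X [CommSemiring R] [Fintype σ]
    {p : MvPolynomial σ R} (hp : p.IsHomogeneous 1) :
    p = ∑ j, coeff (Finsupp.single j 1) p • X j := by
  classical
  ext m
  simp only [coeff_sum, coeff_smul, coeff_X, smul_eq_mul, mul_ite, mul_one, mul_zero]
  by_cases hm : m.degree = 1
  · obtain ⟨a, rfl⟩ := (Finsupp.sum_eq_one_iff _).mp hm
    simp [Finsupp.single_left_inj one_ne_zero]
  · rw [hp.coeff_eq_zero hm, eq_comm]
    refine Finset.sum_eq_zero fun j _ => if_neg ?_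
    rintro rfl
    simp at hm

theorem mem_span_X_image_of_mul_X_mem [CommSemiring R] {s : Set σ} {i : σ} (hi : i ∉ s)
    {p : MvPolynomial σ R} (h : p * X i ∈ Ideal.span (insert (X i ^ 2) (X '' s))) :
    p ∈ Ideal.span (X '' insert i s) := by
  have hgen : insert (X i ^ 2) (X '' s) = (fun d => monomial d (1 : R)) ''
      insert (Finsupp.single i 2) ((Finsupp.single · 1) '' s) := by
    simp only [Set.image_insert_eq, Set.image_image, X_pow_eq_monomial]
    rfl
  rw [hgen, mem_ideal_span_monomial_image] at h
  rw [mem_ideal_span_X_image]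
  intro m hm
  obtain ⟨d, hd, hdm⟩ := h (m + Finsupp.single i 1) (by simpa using hm)
  rcases hd with rfl | ⟨j, hj, rfl⟩
  · refine ⟨i, Set.mem_insert i s, ?_⟩
    have := hdm i
    simp at this
    omega
  · have hji : j ≠ i := fun hji => hi (hji ▸ hj)
    refine ⟨j, Set.mem_insert_of_mem i hj, ?_⟩
    have := hdm j
    simp [hji.symm] at this
    omega

section LinearSubst

variable [Fintype σ] [DecidableEq σ] [CommSemiring R]

theorem bind₁_toMvPolynomial_comp_of_mul_eq_one {M N : Matrix σ σ R} (h : N * M = 1) :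
    (bind₁ M.toMvPolynomial).comp (bind₁ N.toMvPolynomial) = AlgHom.id R _ := by
  rw [bind₁_comp_bind₁, ← bind₁_X_left]
  congr 1
  funext i
  rw [← Matrix.toMvPolynomial_mul, h, Matrix.toMvPolynomial_one]

noncomputable def linearSubst (M : (Matrix σ σ R)ˣ) :
    MvPolynomial σ R ≃ₐ[R] MvPolynomial σ R :=
  AlgEquiv.ofAlgHom (bind₁ (M : Matrix σ σ R).toMvPolynomial)
    (bind₁ (↑M⁻¹ : Matrix σ σ R).toMvPolynomial)
    (bind₁_toMvPolynomial_comp_of_mul_eq_one M.inv_mul)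
    (bind₁_toMvPolynomial_comp_of_mul_eq_one M.mul_inv)

theorem linearSubst_X (M : (Matrix σ σ R)ˣ) (i : σ) :
    linearSubst M (X i) = (M : Matrix σ σ R).toMvPolynomial i :=
  bind₁_X_right _ _

end LinearSubst

theorem exists_algEquiv_X_castLE_eq {K : Type*} [Field K] {m n : ℕ}
    (l : Fin m → MvPolynomial (Fin n) K) (hl : ∀ i, (l i).IsHomogeneous 1)
    (hind : LinearIndependent K l) (hmn : m ≤ n) :
    ∃ φ : MvPolynomial (Fin n) K ≃ₐ[K] MvPolynomial (Fin n) K,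
      ∀ i, φ (X (Fin.castLE hmn i)) = l i := by
  let c : Fin m → Fin n → K := fun i j => coeff (Finsupp.single j 1) (l i)
  have hlc : Fintype.linearCombination K X ∘ c = l := _root_.funext fun i => by
    simp [c, Fintype.linearCombination_apply, ← (hl i).eq_sum_coeff_single_smul_X]
  obtain ⟨w, hw, hwc⟩ :=
    (LinearIndependent.of_comp _ (hlc ▸ hind)).exists_extend_castLE hmn (by simp)
  obtain ⟨M, hM⟩ := Matrix.linearIndependent_rows_iff_isUnit.1 hw
  refine ⟨linearSubst M, fun i => ?_⟩
  rw [linearSubst_X, ← hlc]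
  simp [hM, hwc, Matrix.toMvPolynomial, Fintype.linearCombination_apply, smul_eq_C_mul,
    C_mul_X_eq_monomial]

end MvPolynomial

/-- Case (e) in the proof of Lemma 3.5: if `q₂l₂ + q₁l₁ + q₀l₀ ∈ (l₁, l₂, l₀²)` for
linearly independent linear forms `l₀, l₁, l₂`, then `q₀ ∈ (l₀, l₁, l₂)`. -/
theorem stmt_8 (l₀ l₁ l₂ : MvPolynomial (Fin 5) ℂ)
    (h₀ : l₀.IsHomogeneous 1) (h₁ : l₁.IsHomogeneous 1) (h₂ : l₂.IsHomogeneous 1)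
    (hind : LinearIndependent ℂ ![l₀, l₁, l₂])
    (q₀ q₁ q₂ : MvPolynomial (Fin 5) ℂ)
    (hF : q₂ * l₂ + q₁ * l₁ + q₀ * l₀ ∈ Ideal.span {l₁, l₂, l₀ ^ 2}) :
    q₀ ∈ Ideal.span {l₀, l₁, l₂} := by
  have hmul : q₀ * l₀ ∈ Ideal.span {l₁, l₂, l₀ ^ 2} := by
    refine (Ideal.add_mem_iff_right _ (Ideal.add_mem _ ?_ ?_)).1 hF <;>
      exact Ideal.mul_mem_left _ _ (Ideal.subset_span (by simp))
  obtain ⟨φ, hφ⟩ := exists_algEquiv_X_castLE_eq ![l₀, l₁, l₂]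
    (by simp [Fin.forall_fin_succ, h₀, h₁, h₂]) hind (by norm_num)
  have hψ₀ : φ.symm l₀ = X 0 := φ.symm_apply_eq.2 (hφ 0).symm
  have hψ₁ : φ.symm l₁ = X 1 := φ.symm_apply_eq.2 (hφ 1).symm
  have hψ₂ : φ.symm l₂ = X 2 := φ.symm_apply_eq.2 (hφ 2).symm
  rw [← Ideal.apply_mem_of_equiv_iff (f := φ.symm.toRingEquiv), Ideal.map_span] at hmul ⊢
  simp only [Set.image_insert_eq, Set.image_singleton, AlgEquiv.coe_ringEquiv, map_mul, map_pow,
    hψ₀, hψ₁, hψ₂] at hmul ⊢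
  rw [Set.pair_comm, Set.insert_comm] at hmul
  simpa [Set.image_insert_eq] using
    mem_span_X_image_of_mul_X_mem (s := {1, 2}) (by decide)
      (by simpa [Set.image_insert_eq] using hmul)
end

section
/- Let R = ℂ[x₀,…,x₄] and let l₀, l₁, l₂, l₃, l₄ be ℂ-linearly independent linear forms in R. If q₀, q₁, q₂ ∈ R are such that q₂·l₂ + q₁·l₁ + q₀·l₀ lies in the ideal (l₂, l₀l₄ − l₁l₃, l₁², l₀l₁, l₀²), then q₁·l₄ + q₀·l₃ lies in the ideal (l₀, l₁, l₂). -/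
/-!
After a linear change of coordinates the forms `l₀, …, l₄` are the variables, so a syzygy
`u₀ l₀ + u₁ l₁ + u₂ l₂ = 0` forces `u₀, u₁ ∈ (l₀, l₁, l₂)`: differentiate with respect to the
corresponding variable. Writing the hypothesis as
`q₂ l₂ + q₁ l₁ + q₀ l₀ = a l₂ + b (l₀ l₄ - l₁ l₃) + c l₁² + d l₀ l₁ + f l₀²`
gives such a syzygy with `u₁ = q₁ + b l₃ - c l₁ - d l₀` and `u₀ = q₀ - b l₄ - f l₀`,
and `q₁ l₄ + q₀ l₃ ≡ u₁ l₄ + u₀ l₃` modulo `(l₀, l₁)` because the `b`-terms cancel.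
-/

open MvPolynomial

theorem Matrix.toMvPolynomial_eq_linearCombination {R m n : Type*} [CommSemiring R] [Fintype n]
    (M : Matrix m n R) (i : m) :
    M.toMvPolynomial i = Fintype.linearCombination R X (M i) := by
  simp [Matrix.toMvPolynomial, Fintype.linearCombination_apply, smul_eq_C_mul, C_mul_X_eq_monomial]

namespace MvPolynomial

section LinearSubstitution

variable {R σ : Type*} [CommSemiring R]

theorem aeval_toMvPolynomial_comp {m n : Type*} [Fintype m] [Fintype n] (M : Matrix m n R)
    (N : Matrix σ m R) :
    (aeval M.toMvPolynomial).comp (aeval N.toMvPolynomial) = aeval (N * M).toMvPolynomial := by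
  ext i : 1
  rw [AlgHom.comp_apply, aeval_X, aeval_X, Matrix.toMvPolynomial_mul]
  rfl

noncomputable def linearSubstEquiv [Fintype σ] [DecidableEq σ] (A : (Matrix σ σ R)ˣ) :
    MvPolynomial σ R ≃ₐ[R] MvPolynomial σ R :=
  AlgEquiv.ofAlgHom (aeval (A : Matrix σ σ R).toMvPolynomial)
    (aeval (↑A⁻¹ : Matrix σ σ R).toMvPolynomial)
    (by rw [aeval_toMvPolynomial_comp, A.inv_mul, Matrix.toMvPolynomial_one, aeval_X_left])
    (by rw [aeval_toMvPolynomial_comp, A.mul_inv, Matrix.toMvPolynomial_one, aeval_X_left])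

@[simp]
theorem linearSubstEquiv_X [Fintype σ] [DecidableEq σ] (A : (Matrix σ σ R)ˣ) (i : σ) :
    linearSubstEquiv A (X i) = (A : Matrix σ σ R).toMvPolynomial i :=
  aeval_X _ _

end LinearSubstitution

theorem exists_algEquiv_X_eq_of_linearIndependent {K σ : Type*} [Field K] [Fintype σ]
    [DecidableEq σ] {l : σ → MvPolynomial σ K} (hl : ∀ i, (l i).IsHomogeneous 1)
    (hind : LinearIndependent K l) :
    ∃ e : MvPolynomial σ K ≃ₐ[K] MvPolynomial σ K, ∀ i, e (X i) = l i := by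
  have hcoord : ∀ i, ∃ c : σ → K, Fintype.linearCombination K X c = l i := fun i => by
    simpa [Fintype.linearCombination_apply] using (Submodule.mem_span_range_iff_exists_fun K).1
      (homogeneousSubmodule_one_eq_span_X (σ := σ) (R := K) ▸ hl i)
  choose A hA using hcoord
  obtain ⟨U, hU⟩ : IsUnit (Matrix.of A) :=
    Matrix.linearIndependent_rows_iff_isUnit.1
      (LinearIndependent.of_comp (Fintype.linearCombination K X) (_root_.funext hA ▸ hind))
  refine ⟨linearSubstEquiv U, fun i => ?_⟩
  rw [linearSubstEquiv_X, hU, Matrix.toMvPolynomial_eq_linearCombination]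
  exact hA i

theorem mem_span_X_of_sum_mul_X_eq_zero {R σ : Type*} [CommRing R] {s : Finset σ}
    {u : σ → MvPolynomial σ R} (h : ∑ i ∈ s, u i * X i = 0) {j : σ} (hj : j ∈ s) :
    u j ∈ Ideal.span (X '' s) := by
  classical
  have hderiv : u j + ∑ i ∈ s, X i * pderiv j (u i) = 0 := by
    simpa [Finset.sum_add_distrib, pderiv_X, Pi.single_apply, hj] using congrArg (pderiv j) h
  rw [eq_neg_of_add_eq_zero_left hderiv]
  exact neg_mem (Ideal.sum_mem _ fun i hi =>
    Ideal.mul_mem_right _ _ (Ideal.subset_span ⟨i, hi, rfl⟩))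

end MvPolynomial

theorem RingEquiv.mem_span_of_sum_mul_eq_zero {R S σ : Type*} [CommRing R] [CommRing S]
    (e : MvPolynomial σ R ≃+* S) {l : σ → S} (hl : ∀ i, e (X i) = l i) {s : Finset σ} {u : σ → S}
    (h : ∑ i ∈ s, u i * l i = 0) {j : σ} (hj : j ∈ s) :
    u j ∈ Ideal.span (l '' s) := by
  have h' : ∑ i ∈ s, e.symm (u i) * X i = 0 :=
    e.injective (by simpa [hl] using h)
  have := Ideal.mem_map_of_mem e (mem_span_X_of_sum_mul_X_eq_zero h' hj)
  rwa [Ideal.map_span, ← Set.image_comp, e.apply_symm_apply, show ⇑e ∘ X = l from funext hl]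
    at this

/-- Case (d) in the proof of Lemma 3.5: if `q₂l₂ + q₁l₁ + q₀l₀` lies in the ideal
`(l₂, l₀l₄ - l₁l₃, l₁², l₀l₁, l₀²)` for linearly independent linear forms `l₀, …, l₄`,
then `q₁l₄ + q₀l₃ ∈ (l₀, l₁, l₂)`. -/
theorem stmt_9 (l₀ l₁ l₂ l₃ l₄ : MvPolynomial (Fin 5) ℂ)
    (h₀ : l₀.IsHomogeneous 1) (h₁ : l₁.IsHomogeneous 1) (h₂ : l₂.IsHomogeneous 1)
    (h₃ : l₃.IsHomogeneous 1) (h₄ : l₄.IsHomogeneous 1)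
    (hind : LinearIndependent ℂ ![l₀, l₁, l₂, l₃, l₄])
    (q₀ q₁ q₂ : MvPolynomial (Fin 5) ℂ)
    (hF : q₂ * l₂ + q₁ * l₁ + q₀ * l₀ ∈
      Ideal.span {l₂, l₀ * l₄ - l₁ * l₃, l₁ ^ 2, l₀ * l₁, l₀ ^ 2}) :
    q₁ * l₄ + q₀ * l₃ ∈ Ideal.span {l₀, l₁, l₂} := by
  obtain ⟨e, he⟩ := exists_algEquiv_X_eq_of_linearIndependent (σ := Fin 5)
    (l := ![l₀, l₁, l₂, l₃, l₄]) (fun i => by fin_cases i <;> assumption) hind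
  have hsyz : ∀ u₀ u₁ u₂ : MvPolynomial (Fin 5) ℂ, u₀ * l₀ + u₁ * l₁ + u₂ * l₂ = 0 →
      u₀ ∈ Ideal.span {l₀, l₁, l₂} ∧ u₁ ∈ Ideal.span {l₀, l₁, l₂} := by
    intro u₀ u₁ u₂ h
    have hmem := fun j hj => e.toRingEquiv.mem_span_of_sum_mul_eq_zero he
      (s := {0, 1, 2}) (u := ![u₀, u₁, u₂, 0, 0]) (by simpa [add_assoc] using h) (j := j) hj
    simp only [Finset.coe_insert, Finset.coe_singleton, Set.image_insert_eq,
      Set.image_singleton] at hmem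
    exact ⟨hmem 0 (by simp), hmem 1 (by simp)⟩
  obtain ⟨a, z₁, hz₁, hF⟩ := Ideal.mem_span_insert.1 hF
  obtain ⟨b, z₂, hz₂, rfl⟩ := Ideal.mem_span_insert.1 hz₁
  obtain ⟨c, z₃, hz₃, rfl⟩ := Ideal.mem_span_insert.1 hz₂
  obtain ⟨d, z₄, hz₄, rfl⟩ := Ideal.mem_span_insert.1 hz₃
  obtain ⟨f, rfl⟩ := Ideal.mem_span_singleton'.1 hz₄
  obtain ⟨hu₀, hu₁⟩ := hsyz (q₀ - b * l₄ - f * l₀) (q₁ + b * l₃ - c * l₁ - d * l₀) (q₂ - a)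
    (by linear_combination hF)
  rw [show q₁ * l₄ + q₀ * l₃ = (q₁ + b * l₃ - c * l₁ - d * l₀) * l₄ + (q₀ - b * l₄ - f * l₀) * l₃
      + c * l₄ * l₁ + (d * l₄ + f * l₃) * l₀ by ring]
  refine add_mem (add_mem (add_mem ?_ ?_) ?_) ?_
  · exact Ideal.mul_mem_right _ _ hu₁
  · exact Ideal.mul_mem_right _ _ hu₀
  · exact Ideal.mul_mem_left _ _ (Ideal.subset_span (by simp))
  · exact Ideal.mul_mem_left _ _ (Ideal.subset_span (by simp))
end

section
/- Let R = ℂ[x₀,…,x₄] and let l₀, l₁, l₂, l₃, l₄ be ℂ-linearly independent linear forms in R. Let M_a be the 6×6 skew-symmetric matrix over R with rows (0, l₃, 0, 0, l₀, l₁), (−l₃, 0, 0, −l₀, 0, l₂), (0, 0, 0, −l₁, −l₂, 0), (0, l₀, l₁, 0, l₄, 0), (−l₀, 0, l₂, −l₄, 0, 0), (−l₁, −l₂, 0, 0, 0, 0), and let S_aᵀ be the 2×6 matrix with rows (l₂, −l₁, l₀, 0, 0, l₃) and (0, 0, l₄, l₂, −l₁, l₀). Then the kernel of the R-linear map R⁶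 → R² given by v ↦ S_aᵀ·v equals the R-submodule of R⁶ generated by the six columns of M_a. -/
/-!
A linear change of coordinates `Xᵢ ↦ lᵢ` reduces the statement to `lᵢ = Xᵢ`, over any domain.
Killing `X₁` and `X₂`, the two equations `S_aᵀ v = 0` become `X₀ v₂ + X₃ v₅ = 0` and
`X₄ v₂ + X₀ v₅ = 0`, so `(X₀² - X₃ X₄) v₂` and then `v₅` vanish modulo `(X₁, X₂)`: this is where
the smoothness of the conic enters. Subtracting the matching combination of the first, second,
fourth and fifth columns of `M_a` leaves two Koszul relations `X₂ a = X₁ b`, which are solved by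
the remaining two columns.
-/

open MvPolynomial Matrix

theorem Prime.exists_eq_mul_of_mul_eq_mul {R : Type*} [CommRing R] [IsDomain R] {a b p q : R}
    (hb : Prime b) (hba : ¬b ∣ a) (h : a * p = b * q) : ∃ t, p = b * t ∧ q = a * t := by
  obtain ⟨t, rfl⟩ := (hb.dvd_or_dvd ⟨q, h⟩).resolve_left hba
  exact ⟨t, rfl, mul_left_cancel₀ hb.ne_zero (by rw [← h]; ring)⟩

namespace Matrix

theorem map_mulVec_comp {F R S m n : Type*} [CommRing R] [CommRing S] [Fintype n]
    [FunLike F R S] [RingHomClass F R S] (f : F) (M : Matrix m n R) (w : n → R) :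
    M.map f *ᵥ (f ∘ w) = f ∘ (M *ᵥ w) :=
  funext fun i => (RingHom.map_mulVec (f : R →+* S) M w i).symm

theorem ker_mulVecLin_map_eq_range {R S m n p : Type*} [CommRing R] [CommRing S]
    [Fintype n] [Fintype p] (e : R ≃+* S) {A : Matrix m n R} {B : Matrix n p R}
    (h : LinearMap.ker A.mulVecLin = LinearMap.range B.mulVecLin) :
    LinearMap.ker (A.map e).mulVecLin = LinearMap.range (B.map e).mulVecLin := by
  ext v
  obtain ⟨w, rfl⟩ : ∃ w, v = e ∘ w := ⟨e.symm ∘ v, by ext; simp⟩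
  have hw := SetLike.ext_iff.1 h w
  simp only [LinearMap.mem_ker, LinearMap.mem_range, mulVecLin_apply] at hw ⊢
  rw [map_mulVec_comp, show (0 : m → S) = e ∘ (0 : m → R) by ext; simp,
    e.injective.comp_left.eq_iff, hw]
  constructor
  · rintro ⟨y, rfl⟩
    exact ⟨e ∘ y, map_mulVec_comp e B y⟩
  · rintro ⟨u, hu⟩
    refine ⟨e.symm ∘ u, e.injective.comp_left ?_⟩
    change e ∘ (B *ᵥ (e.symm ∘ u)) = e ∘ w
    rw [← hu, ← map_mulVec_comp]
    congr 1
    ext; simp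

variable {n R : Type*} [Fintype n] [CommSemiring R]

theorem bind₁_toMvPolynomial_comp (M N : Matrix n n R) :
    (bind₁ M.toMvPolynomial).comp (bind₁ N.toMvPolynomial) = bind₁ (N * M).toMvPolynomial :=
  algHom_ext fun i => by simp [toMvPolynomial_mul]

theorem toMvPolynomial_eq_linearCombination_s12 (M : Matrix n n R) (i : n) :
    M.toMvPolynomial i = Fintype.linearCombination R X (M.row i) := by
  simp [toMvPolynomial, Fintype.linearCombination_apply, smul_eq_C_mul, C_mul_X_eq_monomial]

end Matrix

namespace MvPolynomial

theorem exists_algEquiv_X_eq_of_isHomogeneous_one {σ K : Type*} [Fintype σ] [DecidableEq σ]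
    [Field K] (l : σ → MvPolynomial σ K) (hl : ∀ i, (l i).IsHomogeneous 1)
    (hind : LinearIndependent K l) :
    ∃ e : MvPolynomial σ K ≃ₐ[K] MvPolynomial σ K, ∀ i, e (X i) = l i := by
  have hspan (i : σ) : l i ∈ Submodule.span K (Set.range X) := by
    rw [← homogeneousSubmodule_one_eq_span_X]; exact hl i
  choose A hA using fun i => (Submodule.mem_span_range_iff_exists_fun K).1 (hspan i)
  have hrows : Fintype.linearCombination K X ∘ (of A).row = l := by
    funext i
    exact (Fintype.linearCombination_apply _ _ _).trans (hA i)
  have hAl : (of A).toMvPolynomial = l := by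
    funext i
    rw [toMvPolynomial_eq_linearCombination_s12, ← hrows, Function.comp_apply]
  have hdet : IsUnit (of A).det := (isUnit_iff_isUnit_det _).1 <|
    linearIndependent_rows_iff_isUnit.1 (.of_comp _ (hrows ▸ hind))
  refine ⟨AlgEquiv.ofAlgHom (bind₁ l) (bind₁ (of A)⁻¹.toMvPolynomial) ?_ ?_,
    fun i => bind₁_X_right l i⟩
  · rw [← hAl, bind₁_toMvPolynomial_comp, nonsing_inv_mul _ hdet, toMvPolynomial_one,
      bind₁_X_left]
  · rw [← hAl, bind₁_toMvPolynomial_comp, mul_nonsing_inv _ hdet, toMvPolynomial_one,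
      bind₁_X_left]

variable {σ R : Type*} [CommRing R]

theorem sub_aeval_mem_span_X {s : Set σ} {f : σ → MvPolynomial σ R} (hs : ∀ j ∈ s, f j = 0)
    (hf : ∀ j ∉ s, f j = X j) (p : MvPolynomial σ R) :
    p - aeval f p ∈ Ideal.span (X '' s) := by
  induction p using MvPolynomial.induction_on with
  | C a => simp
  | add p q hp hq => simpa only [map_add, add_sub_add_comm] using add_mem hp hq
  | mul_X p j hp =>
    rw [map_mul, aeval_X]
    by_cases hj : j ∈ s
    · simpa [hs j hj] using Ideal.mul_mem_left _ p (Ideal.subset_span (Set.mem_image_of_mem X hj))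
    · simpa [hf j hj, sub_mul] using Ideal.mul_mem_right (X j) _ hp

theorem exists_eq_X_mul_of_X_mul_eq [IsDomain R] {i j : σ} (hij : i ≠ j)
    {p q : MvPolynomial σ R} (h : X i * p = X j * q) : ∃ t, p = X j * t ∧ q = X i * t :=
  X_prime.exists_eq_mul_of_mul_eq_mul (by simpa [X_dvd_X] using hij.symm) h

end MvPolynomial

section ConicMatrices

variable {R : Type*} [CommRing R]

-- `conicS l` and `conicM l` are the matrices `S_aᵀ` and `M_a` of case (a), with `l i` for `lᵢ`.
def conicS (l : Fin 5 → R) : Matrix (Fin 2) (Fin 6) R :=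
  !![l 2, -l 1, l 0, 0, 0, l 3;
     0, 0, l 4, l 2, -l 1, l 0]

def conicM (l : Fin 5 → R) : Matrix (Fin 6) (Fin 6) R :=
  !![0, l 3, 0, 0, l 0, l 1;
     -l 3, 0, 0, -l 0, 0, l 2;
     0, 0, 0, -l 1, -l 2, 0;
     0, l 0, l 1, 0, l 4, 0;
     -l 0, 0, l 2, -l 4, 0, 0;
     -l 1, -l 2, 0, 0, 0, 0]

theorem conicS_map {S F : Type*} [CommRing S] [FunLike F R S] [RingHomClass F R S] (f : F)
    (l : Fin 5 → R) : (conicS l).map f = conicS (f ∘ l) := by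
  ext i j; fin_cases i <;> fin_cases j <;> simp [conicS]

theorem conicM_map {S F : Type*} [CommRing S] [FunLike F R S] [RingHomClass F R S] (f : F)
    (l : Fin 5 → R) : (conicM l).map f = conicM (f ∘ l) := by
  ext i j; fin_cases i <;> fin_cases j <;> simp [conicM]

theorem conicS_mul_conicM (l : Fin 5 → R) : conicS l * conicM l = 0 := by
  ext i j
  fin_cases i <;> fin_cases j <;> simp [conicS, conicM, mul_apply, Fin.sum_univ_six] <;> ring

theorem conicS_mulVec_eq_zero_iff (l : Fin 5 → R) (v : Fin 6 → R) :
    conicS l *ᵥ v = 0 ↔ l 2 * v 0 - l 1 * v 1 + l 0 * v 2 + l 3 * v 5 = 0 ∧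
      l 4 * v 2 + l 2 * v 3 - l 1 * v 4 + l 0 * v 5 = 0 := by
  have h₀ : (conicS l *ᵥ v) 0 = l 2 * v 0 - l 1 * v 1 + l 0 * v 2 + l 3 * v 5 := by
    simp only [conicS, mulVec, dotProduct, Fin.sum_univ_six, of_apply, cons_val', cons_val_fin_one, cons_val_zero, cons_val_one, cons_val]
    ring
  have h₁ : (conicS l *ᵥ v) 1 = l 4 * v 2 + l 2 * v 3 - l 1 * v 4 + l 0 * v 5 := by
    simp only [conicS, mulVec, dotProduct, Fin.sum_univ_six, of_apply, cons_val', cons_val_fin_one, cons_val_zero, cons_val_one, cons_val]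
    ring
  rw [funext_iff, Fin.forall_fin_two, h₀, h₁, Pi.zero_apply, Pi.zero_apply]

theorem conicM_mulVec (l : Fin 5 → R) (u : Fin 6 → R) :
    conicM l *ᵥ u = ![l 3 * u 1 + l 0 * u 4 + l 1 * u 5, -(l 3 * u 0) - l 0 * u 3 + l 2 * u 5,
      -(l 1 * u 3) - l 2 * u 4, l 0 * u 1 + l 1 * u 2 + l 4 * u 4,
      -(l 0 * u 0) + l 2 * u 2 - l 4 * u 3, -(l 1 * u 0) - l 2 * u 1] := by
  ext i
  fin_cases i <;>
    simp only [conicM, mulVec, dotProduct, Fin.sum_univ_six, Fin.zero_eta, Fin.mk_one,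
      Fin.reduceFinMk, of_apply, cons_val', cons_val_fin_one, cons_val_zero, cons_val_one, cons_val] <;>
    ring

end ConicMatrices

section Syzygies

variable {K : Type*} [CommRing K] [IsDomain K]

local notation "P" => MvPolynomial (Fin 5) K

theorem conic_ne_zero : (X 0 ^ 2 - X 3 * X 4 : P) ≠ 0 := fun h => by
  simpa using congrArg (eval ![0, 0, 0, 1, 1]) h

theorem mem_span_X_one_X_two_of_conicS_mulVec_eq_zero {v : Fin 6 → P}
    (hv : conicS X *ᵥ v = 0) : v 2 ∈ Ideal.span {X 1, X 2} ∧ v 5 ∈ Ideal.span {X 1, X 2} := by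
  set π : P →ₐ[K] P := aeval ![X 0, 0, 0, X 3, X 4]
  have hker (p : P) (hp : π p = 0) : p ∈ Ideal.span {X 1, X 2} := by
    have hs : ∀ j ∈ ({1, 2} : Set (Fin 5)), ![X 0, 0, 0, X 3, X 4] j = (0 : P) := by
      rintro j (rfl | rfl) <;> rfl
    have hf : ∀ j ∉ ({1, 2} : Set (Fin 5)), ![X 0, 0, 0, X 3, X 4] j = (X j : P) := by
      intro j hj; fin_cases j <;> simp_all
    have h : p - π p ∈ Ideal.span (X '' {1, 2}) := sub_aeval_mem_span_X hs hf p
    rwa [hp, sub_zero, Set.image_pair] at h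
  obtain ⟨h₁, h₂⟩ := (conicS_mulVec_eq_zero_iff _ _).1 hv
  replace h₁ := congrArg π h₁
  replace h₂ := congrArg π h₂
  simp only [π, map_add, map_sub, map_mul, map_zero, aeval_X, cons_val, cons_val_zero,
    cons_val_one, zero_mul, sub_self, zero_add, add_zero, sub_zero] at h₁ h₂
  change X 0 * π (v 2) + X 3 * π (v 5) = 0 at h₁
  change X 4 * π (v 2) + X 0 * π (v 5) = 0 at h₂
  have hv₂ : π (v 2) = 0 :=
    (mul_eq_zero.1 (by linear_combination X 0 * h₁ - X 3 * h₂)).resolve_left conic_ne_zero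
  have hv₅ : π (v 5) = 0 :=
    (mul_eq_zero.1 (by linear_combination h₁ - X 0 * hv₂)).resolve_left (X_ne_zero 3)
  exact ⟨hker _ hv₂, hker _ hv₅⟩

theorem ker_conicS_X_eq_range_conicM :
    LinearMap.ker (conicS (X : Fin 5 → P)).mulVecLin = LinearMap.range (conicM X).mulVecLin := by
  refine le_antisymm (fun v hv => ?_) ?_
  · rw [LinearMap.mem_ker, mulVecLin_apply] at hv
    obtain ⟨hv₂, hv₅⟩ := mem_span_X_one_X_two_of_conicS_mulVec_eq_zero hv
    obtain ⟨u₃, u₄, hu₂⟩ := Ideal.mem_span_pair.1 hv₂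
    obtain ⟨u₀, u₁, hu₅⟩ := Ideal.mem_span_pair.1 hv₅
    obtain ⟨E₁, E₂⟩ := (conicS_mulVec_eq_zero_iff _ _).1 hv
    have k₁ : X 2 * (v 0 + X 3 * u₁ + X 0 * u₄) = X 1 * (v 1 - X 3 * u₀ - X 0 * u₃) := by
      linear_combination E₁ + X 0 * hu₂ + X 3 * hu₅
    have k₂ : X 2 * (v 3 + X 0 * u₁ + X 4 * u₄) = X 1 * (v 4 - X 0 * u₀ - X 4 * u₃) := by
      linear_combination E₂ + X 4 * hu₂ + X 0 * hu₅
    obtain ⟨u₅, h₀, h₁⟩ := exists_eq_X_mul_of_X_mul_eq (by decide) k₁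
    obtain ⟨u₂, h₃, h₄⟩ := exists_eq_X_mul_of_X_mul_eq (by decide) k₂
    refine ⟨![-u₀, -u₁, u₂, -u₃, -u₄, u₅], ?_⟩
    rw [mulVecLin_apply, conicM_mulVec]
    funext i
    fin_cases i <;> simp only [Fin.zero_eta, Fin.mk_one, Fin.reduceFinMk, cons_val]
    · linear_combination -h₀
    · linear_combination -h₁
    · linear_combination hu₂
    · linear_combination -h₃
    · linear_combination -h₄
    · linear_combination hu₅
  · rw [LinearMap.range_le_ker_iff, ← mulVecLin_mul, conicS_mul_conicM, mulVecLin_zero]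

end Syzygies

/-- Proposition 1.2, case (a): the kernel of `v ↦ S_aᵀ · v` is the submodule
generated by the columns of the skew-symmetric matrix `M_a`. -/
theorem stmt_12 (l₀ l₁ l₂ l₃ l₄ : MvPolynomial (Fin 5) ℂ)
    (h₀ : l₀.IsHomogeneous 1) (h₁ : l₁.IsHomogeneous 1) (h₂ : l₂.IsHomogeneous 1)
    (h₃ : l₃.IsHomogeneous 1) (h₄ : l₄.IsHomogeneous 1)
    (hind : LinearIndependent ℂ ![l₀, l₁, l₂, l₃, l₄]) :
    LinearMap.ker
        (Matrix.mulVecLin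
          (!![l₂, -l₁, l₀, 0, 0, l₃;
              0, 0, l₄, l₂, -l₁, l₀] : Matrix (Fin 2) (Fin 6) (MvPolynomial (Fin 5) ℂ))) =
      Submodule.span (MvPolynomial (Fin 5) ℂ)
        (Set.range fun j i =>
          (!![0, l₃, 0, 0, l₀, l₁;
              -l₃, 0, 0, -l₀, 0, l₂;
              0, 0, 0, -l₁, -l₂, 0;
              0, l₀, l₁, 0, l₄, 0;
              -l₀, 0, l₂, -l₄, 0, 0;
              -l₁, -l₂, 0, 0, 0, 0] : Matrix (Fin 6) (Fin 6) (MvPolynomial (Fin 5) ℂ)) i j) := by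
  obtain ⟨e, he⟩ := exists_algEquiv_X_eq_of_isHomogeneous_one ![l₀, l₁, l₂, l₃, l₄]
    (by intro i; fin_cases i <;> assumption) hind
  have hl : e.toRingEquiv ∘ X = ![l₀, l₁, l₂, l₃, l₄] := funext he
  have key := ker_mulVecLin_map_eq_range e.toRingEquiv (ker_conicS_X_eq_range_conicM (K := ℂ))
  rwa [conicS_map, conicM_map, hl, Matrix.range_mulVecLin] at key
end

section
/- Let l₀, l₁, l₂, l₃, l₄ be linear forms on ℂ⁵ forming a basis of the dual space (ℂ⁵)*. For x ∈ ℂ⁵ let T(x) be the 2×6 complex matrix with rows (l₂(x), −l₁(x), l₀(x), 0, 0, l₃(x)) and (0, 0, l₄(x), l₂(x), −l₁(x), l₀(x)). Then: (i) for every x ≠ 0 the matrix T(x) is nonzero (i.e., has rank at least 1); and (ii) T(x) has rank at most 1 if and only if l₁(x) = 0, l₂(x) = 0, and l₃(x)·l₄(x) = l₀(x)². -/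
/-!
A `2 × n` matrix has rank at most one exactly when all its `2 × 2` minors vanish. For `T(x)` the
minors in the column pairs `(0, 3)`, `(1, 4)` and `(2, 5)` are `l₂(x)²`, `l₁(x)²` and
`l₀(x)² - l₃(x) l₄(x)`, and once these vanish so do all the others. Nonvanishing of `T(x)` for
`x ≠ 0` holds because its entries contain all five forms, which span the dual space.
-/

open Matrix Module

theorem Module.exists_mem_apply_ne_zero_of_span_eq_top {K V : Type*} [Field K] [AddCommGroup V]
    [Module K V] {s : Set (Dual K V)} (hs : Submodule.span K s = ⊤) {x : V} (hx : x ≠ 0) :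
    ∃ f ∈ s, f x ≠ 0 := by
  by_contra! h
  have hker : Submodule.span K s ≤ LinearMap.ker (Dual.eval K V x) := Submodule.span_le.2 h
  rw [hs, top_le_iff, LinearMap.ker_eq_top] at hker
  exact hx ((forall_dual_apply_eq_zero_iff K x).1 fun φ => LinearMap.congr_fun hker φ)

theorem not_linearIndependent_pair_iff {K n : Type*} [Field K] {u v : n → K} :
    ¬LinearIndependent K ![u, v] ↔ ∀ i j, u i * v j = u j * v i := by
  rw [LinearIndependent.pair_iff]
  push Not
  constructor
  · rintro ⟨s, t, hst, hne⟩ i j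
    have hi := congrFun hst i
    have hj := congrFun hst j
    simp only [Pi.add_apply, Pi.smul_apply, smul_eq_mul, Pi.zero_apply] at hi hj
    have hs : s * (u i * v j - u j * v i) = 0 := by linear_combination v j * hi - v i * hj
    have ht : t * (u i * v j - u j * v i) = 0 := by linear_combination u i * hj - u j * hi
    rcases eq_or_ne s 0 with rfl | hs0
    · exact sub_eq_zero.1 ((mul_eq_zero.1 ht).resolve_left (hne rfl))
    · exact sub_eq_zero.1 ((mul_eq_zero.1 hs).resolve_left hs0)
  · intro h
    by_cases hu : u = 0
    · exact ⟨1, 0, by simp [hu], fun h => absurd h one_ne_zero⟩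
    obtain ⟨k, hk⟩ := Function.ne_iff.mp hu
    refine ⟨v k, -u k, funext fun j => ?_, fun _ => neg_ne_zero.2 hk⟩
    simp only [Pi.add_apply, Pi.smul_apply, smul_eq_mul, Pi.zero_apply]
    linear_combination h j k

namespace Matrix

variable {K n : Type*} [Field K] [Fintype n]

theorem rank_pos_iff {m : Type*} [Finite m] {A : Matrix m n K} : 0 < A.rank ↔ A ≠ 0 := by
  rw [rank_eq_finrank_span_row, Nat.pos_iff_ne_zero, Ne, Submodule.finrank_eq_zero,
    Submodule.span_eq_bot, Set.forall_mem_range, not_iff_not]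
  exact ⟨fun h => funext h, fun h i => by rw [h]; rfl⟩

theorem rank_le_one_iff_not_linearIndependent_row {A : Matrix (Fin 2) n K} :
    A.rank ≤ 1 ↔ ¬LinearIndependent K A.row := by
  have hle := A.rank_le_card_height
  rw [rank_eq_finrank_span_row, Fintype.card_fin] at hle
  rw [rank_eq_finrank_span_row, linearIndependent_iff_card_eq_finrank_span, Fintype.card_fin,
    Set.finrank]
  omega

theorem rank_le_one_iff_of_fin_two {A : Matrix (Fin 2) n K} :
    A.rank ≤ 1 ↔ ∀ i j, A 0 i * A 1 j = A 0 j * A 1 i := by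
  rw [rank_le_one_iff_not_linearIndependent_row, ← not_linearIndependent_pair_iff,
    show A.row = ![A 0, A 1] from funext (Fin.forall_fin_two.2 ⟨rfl, rfl⟩)]

end Matrix

/-- The matrix `T(x)` with `(a, b, c, d, e) = (l₀(x), l₁(x), l₂(x), l₃(x), l₄(x))`. -/
def conicMatrix {K : Type*} [Field K] (a b c d e : K) : Matrix (Fin 2) (Fin 6) K :=
  !![c, -b, a, 0, 0, d; 0, 0, e, c, -b, a]

section conicMatrix

variable {K : Type*} [Field K] (a b c d e : K)

theorem conicMatrix_eq_zero_iff :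
    conicMatrix a b c d e = 0 ↔ a = 0 ∧ b = 0 ∧ c = 0 ∧ d = 0 ∧ e = 0 := by
  simp only [conicMatrix, ← ext_iff, of_apply, cons_val', cons_val_fin_one, Matrix.zero_apply,
    Fin.forall_fin_succ, Fin.isValue, cons_val_zero, cons_val_succ, forall_const, neg_eq_zero, true_and]
  tauto

theorem conicMatrix_rank_le_one_iff :
    (conicMatrix a b c d e).rank ≤ 1 ↔ b = 0 ∧ c = 0 ∧ d * e = a ^ 2 := by
  rw [rank_le_one_iff_of_fin_two]
  constructor
  · intro h
    have hb : b = 0 := by simpa [conicMatrix] using h 1 4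
    have hc : c = 0 := by simpa [conicMatrix] using h 0 3
    have hde : a * a = d * e := by simpa [conicMatrix] using h 2 5
    exact ⟨hb, hc, by rw [sq, hde]⟩
  · rintro ⟨rfl, rfl, hde⟩ i j
    fin_cases i <;> fin_cases j <;> simp [conicMatrix, ← sq, hde]

end conicMatrix

theorem stmt_18_general (l₀ l₁ l₂ l₃ l₄ : Module.Dual ℂ (Fin 5 → ℂ))
    (hspan : Submodule.span ℂ {l₀, l₁, l₂, l₃, l₄} = ⊤) :
    (∀ x : Fin 5 → ℂ, x ≠ 0 →
      1 ≤ (!![l₂ x, -l₁ x, l₀ x, 0, 0, l₃ x;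
              0, 0, l₄ x, l₂ x, -l₁ x, l₀ x] : Matrix (Fin 2) (Fin 6) ℂ).rank) ∧
    (∀ x : Fin 5 → ℂ,
      (!![l₂ x, -l₁ x, l₀ x, 0, 0, l₃ x;
          0, 0, l₄ x, l₂ x, -l₁ x, l₀ x] : Matrix (Fin 2) (Fin 6) ℂ).rank ≤ 1 ↔
        (l₁ x = 0 ∧ l₂ x = 0 ∧ l₃ x * l₄ x = l₀ x ^ 2)) := by
  refine ⟨fun x hx => ?_, fun x => conicMatrix_rank_le_one_iff _ _ _ _ _⟩
  obtain ⟨f, hf, hfx⟩ := exists_mem_apply_ne_zero_of_span_eq_top hspan hx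
  refine rank_pos_iff.2 fun hT => hfx ?_
  obtain ⟨h₀, h₁, h₂, h₃, h₄⟩ := (conicMatrix_eq_zero_iff _ _ _ _ _).1 hT
  rcases hf with rfl | rfl | rfl | rfl | rfl <;> assumption

/-- Lemma 3.3, rank-locus computation: for linear forms `l₀, …, l₄` forming a basis of
the dual of `ℂ⁵` and
`T(x) = ((l₂(x), −l₁(x), l₀(x), 0, 0, l₃(x)), (0, 0, l₄(x), l₂(x), −l₁(x), l₀(x)))`,
(i) `T(x)` is nonzero (rank ≥ 1) for all `x ≠ 0`, and
(ii) `rank T(x) ≤ 1` iff `l₁(x) = 0`, `l₂(x) = 0` and `l₃(x)·l₄(x) = l₀(x)²`. -/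
theorem stmt_18 (l₀ l₁ l₂ l₃ l₄ : Module.Dual ℂ (Fin 5 → ℂ))
    (hind : LinearIndependent ℂ ![l₀, l₁, l₂, l₃, l₄])
    (hspan : Submodule.span ℂ {l₀, l₁, l₂, l₃, l₄} = ⊤) :
    (∀ x : Fin 5 → ℂ, x ≠ 0 →
      1 ≤ (!![l₂ x, -l₁ x, l₀ x, 0, 0, l₃ x;
              0, 0, l₄ x, l₂ x, -l₁ x, l₀ x] : Matrix (Fin 2) (Fin 6) ℂ).rank) ∧
    (∀ x : Fin 5 → ℂ,
      (!![l₂ x, -l₁ x, l₀ x, 0, 0, l₃ x;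
          0, 0, l₄ x, l₂ x, -l₁ x, l₀ x] : Matrix (Fin 2) (Fin 6) ℂ).rank ≤ 1 ↔
        (l₁ x = 0 ∧ l₂ x = 0 ∧ l₃ x * l₄ x = l₀ x ^ 2)) :=
  stmt_18_general l₀ l₁ l₂ l₃ l₄ hspan
end
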